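/- arXiv:2205.04694 — 7 statements merged into one kernel-verified Lean document; each statement's English description precedes it below -/
import Mathlib

section
/- If β is a circular order on X, x1 ⋖ x2 ⋖ ... ⋖ xℓ, and 1 ≤ i < j < k ≤ ℓ with x_i = x_j ≠ x_k, then x_m = x_i for every m with i ≤ m ≤ j. -/
/-- A circular order on `X`: a ternary relation satisfying Huntington's axioms
(CO1)-(CO4), holding only for triples of distinct points. -/
structure CircOrder (X : Type*) where
  btw : X → X → X → Prop
  distinct : ∀ {u v w}, btw u v w → u ≠ v ∧ v ≠ w ∧ u ≠ w
  total : ∀ {u v w : X}, u ≠ v → v ≠ w → u ≠ w → btw u v w ∨ btw w v u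
  asymm : ∀ {u v w}, btw u v w → ¬ btw w v u
  cyclic : ∀ {u v w}, btw u v w → btw v w u
  btw_trans : ∀ {u v w x}, btw u v w → btw u w x → btw u v x

/-- `x₀ ⋖ x₁ ⋖ ... ⋖ x_{n-1}`: the sequence contains at least three distinct
points and `β (x i) (x j) (x k)` holds for all `i < j < k` with distinct values. -/
def CircOrder.Chain {X : Type*} (C : CircOrder X) {n : ℕ} (x : Fin n → X) : Prop :=
  (∃ i j k : Fin n, x i ≠ x j ∧ x j ≠ x k ∧ x i ≠ x k) ∧
  ∀ i j k : Fin n, i < j → j < k →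
    x i ≠ x j → x j ≠ x k → x i ≠ x k → C.btw (x i) (x j) (x k)

/-- The arc from `a` to `b` (in the direction of the circular order). -/
def CircOrder.arc {X : Type*} (C : CircOrder X) (a b : X) : Set X :=
  {t | C.btw a t b} ∪ {a, b}

/-- `A` is an arc of the circular order: a nonempty proper subset with no four
distinct points `u, v ∈ A`, `s, t ∉ A` arranged cyclically as `u ⋖ s ⋖ v ⋖ t`. -/
def CircOrder.IsArc {X : Type*} (C : CircOrder X) (A : Set X) : Prop :=
  A.Nonempty ∧ A ≠ Set.univ ∧
    ¬ ∃ u v s t : X, u ∈ A ∧ v ∈ A ∧ s ∉ A ∧ t ∉ A ∧ u ≠ v ∧ s ≠ t ∧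
      C.Chain ![u, s, v, t]

/-- `d` is a dissimilarity on `X`. -/
def Dissim {X : Type*} (d : X → X → ℝ) : Prop :=
  (∀ x y, d x y = d y x) ∧ (∀ x y, 0 ≤ d x y) ∧ (∀ x y, d x y = 0 ↔ x = y)

/-- The set of farthest neighbors of `x`. -/
def Fset {X : Type*} (d : X → X → ℝ) (x : X) : Set X :=
  {y | ∀ z, d x z ≤ d x y}

/-- `β` is compatible in the pre-circular Robinson sense: every quadruple
`x ⋖ y ⋖ z ⋖ t` satisfies `cR(x,y,z,t)`. -/
def preCompat {X : Type*} (C : CircOrder X) (d : X → X → ℝ) : Prop :=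
  ∀ x y z t : X, C.Chain ![x, y, z, t] →
    min (max (d x y) (d y z)) (max (d x t) (d t z)) ≤ d x z

/-- `β` is compatible in the strictly pre-circular (= strictly circular)
Robinson sense: every quadruple of distinct points `x ⋖ y ⋖ z ⋖ t`
satisfies `scR(x,y,z,t)`. -/
def spreCompat {X : Type*} (C : CircOrder X) (d : X → X → ℝ) : Prop :=
  ∀ x y z t : X, List.Pairwise (· ≠ ·) [x, y, z, t] → C.Chain ![x, y, z, t] →
    min (max (d x y) (d y z)) (max (d x t) (d t z)) < d x z

/-- `β` is compatible in the quasi-circular Robinson sense: every quadruple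
`x ⋖ y ⋖ z ⋖ t` satisfies `qcR(x,y,z,t)`. -/
def qcCompat {X : Type*} (C : CircOrder X) (d : X → X → ℝ) : Prop :=
  ∀ x y z t : X, C.Chain ![x, y, z, t] → min (d y z) (d t z) ≤ d x z

/-- `β` is compatible in the strictly quasi-circular Robinson sense: every
quadruple of distinct points `x ⋖ y ⋖ z ⋖ t` satisfies `sqcR(x,y,z,t)`. -/
def sqcCompat {X : Type*} (C : CircOrder X) (d : X → X → ℝ) : Prop :=
  ∀ x y z t : X, List.Pairwise (· ≠ ·) [x, y, z, t] → C.Chain ![x, y, z, t] →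
    min (d y z) (d t z) < d x z

/-- The arc from `a` to `b`, with the linear order induced by the circular
order, is a Robinson space: any `u, v, w` arranged as `a ⋖ u ⋖ v ⋖ w ⋖ b`
satisfy the Robinson inequality. -/
def RobinsonOnArc {X : Type*} (C : CircOrder X) (d : X → X → ℝ) (a b : X) : Prop :=
  ∀ u v w : X, C.Chain ![a, u, v, w, b] → max (d u v) (d v w) ≤ d u w

/-- The left arc `L_x = {t ∈ M_x : x ⋖ t ⋖ F_x}`. -/
def Lset {X : Type*} (C : CircOrder X) (d : X → X → ℝ) (x : X) : Set X :=
  {t | t ≠ x ∧ t ∉ Fset d x ∧ ∀ s ∈ Fset d x, C.btw x t s}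

/-- The right arc `R_x = {t ∈ M_x : F_x ⋖ t ⋖ x}`. -/
def Rset {X : Type*} (C : CircOrder X) (d : X → X → ℝ) (x : X) : Set X :=
  {t | t ≠ x ∧ t ∉ Fset d x ∧ ∀ s ∈ Fset d x, C.btw s t x}

theorem stmt2 {X : Type*} (C : CircOrder X) {n : ℕ} (x : Fin n → X)
    (h : C.Chain x) (i j k : Fin n) (hij : i < j) (hjk : j < k)
    (heq : x i = x j) (hne : x j ≠ x k) :
    ∀ m : Fin n, i ≤ m → m ≤ j → x m = x i := by
  intro m him hmj
  rcases eq_or_lt_of_le him with rfl | him'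
  · rfl
  rcases eq_or_lt_of_le hmj with rfl | hmj'
  · exact heq.symm
  by_contra hne2
  have hc := h.2
  have clash : ∀ u v w : X, C.btw u v w → C.btw u w v → False :=
    fun u v w h1 h2 => C.asymm h1 (C.cyclic h2)
  have hmj2 : x m ≠ x j := by rw [← heq]; exact hne2
  have hik : x i ≠ x k := heq ▸ hne
  by_cases hck : x m = x k
  · -- need a third value
    obtain ⟨p, q, r, d1, d2, d3⟩ := h.1
    have ⟨s, hsa, hsc⟩ : ∃ s, x s ≠ x i ∧ x s ≠ x m := by
      by_contra hall
      push_neg at hall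
      rcases ne_or_eq (x p) (x i) with h1 | h1
      · rcases ne_or_eq (x q) (x i) with h2 | h2
        · exact d1 ((hall p h1).trans (hall q h2).symm)
        · rcases ne_or_eq (x r) (x i) with h3 | h3
          · exact d3 ((hall p h1).trans (hall r h3).symm)
          · exact d2 (h2.trans h3.symm)
      · rcases ne_or_eq (x q) (x i) with h2 | h2
        · rcases ne_or_eq (x r) (x i) with h3 | h3
          · exact d2 ((hall q h2).trans (hall r h3).symm)
          · exact d3 (h1.trans h3.symm)
        · exact d1 (h1.trans h2.symm)
    have hsj : x s ≠ x j := by rw [← heq]; exact hsa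
    have hsk : x s ≠ x k := by rw [← hck]; exact hsc
    rcases lt_trichotomy s i with h1 | h1 | h1
    · have b1 : C.btw (x s) (x i) (x m) :=
        hc s i m h1 him' hsa (Ne.symm hne2) hsc
      have b2 : C.btw (x s) (x m) (x j) :=
        hc s m j (h1.trans him') hmj' hsc hmj2 hsj
      rw [← heq] at b2
      exact clash _ _ _ b1 b2
    · exact hsa (by rw [h1])
    rcases lt_trichotomy s m with h2 | h2 | h2
    · have b1 : C.btw (x i) (x s) (x m) :=
        hc i s m h1 h2 hsa.symm hsc (Ne.symm hne2)
      have b2 : C.btw (x s) (x j) (x k) :=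
        hc s j k (h2.trans hmj') hjk hsj hne hsk
      rw [← heq, ← hck] at b2
      exact clash _ _ _ b1 (C.cyclic b2)
    · exact hsc (by rw [h2])
    rcases lt_trichotomy s j with h3 | h3 | h3
    · have b1 : C.btw (x i) (x m) (x s) :=
        hc i m s him' h2 (Ne.symm hne2) hsc.symm hsa.symm
      have b2 : C.btw (x i) (x s) (x k) :=
        hc i s k h1 (h3.trans hjk) hsa.symm hsk hik
      rw [← hck] at b2
      exact clash _ _ _ b1 b2
    · exact hsa (by rw [h3, ← heq])
    · have b1 : C.btw (x i) (x m) (x s) :=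
        hc i m s him' (hmj'.trans h3) (Ne.symm hne2) hsc.symm hsa.symm
      have b2 : C.btw (x m) (x j) (x s) :=
        hc m j s hmj' h3 hmj2 hsj.symm hsc.symm
      rw [← heq] at b2
      exact clash _ _ _ b1 (C.cyclic b2)
  · have b1 : C.btw (x i) (x m) (x k) :=
      hc i m k him' (hmj'.trans hjk) (Ne.symm hne2) hck hik
    have b2 : C.btw (x m) (x j) (x k) :=
      hc m j k hmj' hjk hmj2 hne hck
    rw [← heq] at b2
    exact clash _ _ _ b1 (C.cyclic b2)
end

section
/- Let A and B be two arcs of a circularly ordered finite set (X, β). If there exists a point x in X outside A ∪ B, then A ∩ B is an arc or empty. -/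
lemma chain4_mk {X : Type*} (C : CircOrder X) {a b c d : X}
    (h1 : C.btw a b c) (h2 : C.btw a b d) (h3 : C.btw a c d) (h4 : C.btw b c d) :
    C.Chain ![a, b, c, d] := by
  obtain ⟨hab, hbc, hac⟩ := C.distinct h1
  constructor
  · exact ⟨0, 1, 2, hab, hbc, hac⟩
  · intro i j k hij hjk _ _ _
    fin_cases i <;> fin_cases j <;> fin_cases k <;>
      simp_all [Matrix.cons_val_zero, Matrix.cons_val_one, Matrix.head_cons] <;>
      first
        | exact h1 | exact h2 | exact h3 | exact h4
        | exact absurd hij (by decide) | exact absurd hjk (by decide)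

lemma chain4_get {X : Type*} {C : CircOrder X} {a b c d : X}
    (h : C.Chain ![a, b, c, d]) (hab : a ≠ b) (hac : a ≠ c) (had : a ≠ d)
    (hbc : b ≠ c) (hbd : b ≠ d) (hcd : c ≠ d) :
    C.btw a b c ∧ C.btw a b d ∧ C.btw a c d ∧ C.btw b c d :=
  ⟨h.2 0 1 2 (by decide) (by decide) hab hbc hac,
   h.2 0 1 3 (by decide) (by decide) hab hbd had,
   h.2 0 2 3 (by decide) (by decide) hac hcd had,
   h.2 1 2 3 (by decide) (by decide) hbc hcd hbd⟩

theorem stmt3 {X : Type*} [Fintype X] (C : CircOrder X) (A B : Set X)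
    (hA : C.IsArc A) (hB : C.IsArc B) (hx : ∃ x : X, x ∉ A ∪ B) :
    C.IsArc (A ∩ B) ∨ A ∩ B = ∅ := by
  by_cases hne : A ∩ B = ∅
  · exact Or.inr hne
  left
  obtain ⟨x, hxAB⟩ := hx
  have hxA : x ∉ A := fun h => hxAB (Or.inl h)
  have hxB : x ∉ B := fun h => hxAB (Or.inr h)
  refine ⟨Set.nonempty_iff_ne_empty.2 hne, ?_, ?_⟩
  · intro h
    exact hxA (h ▸ (Set.mem_univ x) : x ∈ A ∩ B).1
  rintro ⟨u, v, s, t, hu, hv, hs, ht, huv, hst, hch⟩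
  have killA : s ∉ A → t ∉ A → False := fun h1 h2 =>
    hA.2.2 ⟨u, v, s, t, hu.1, hv.1, h1, h2, huv, hst, hch⟩
  have killB : s ∉ B → t ∉ B → False := fun h1 h2 =>
    hB.2.2 ⟨u, v, s, t, hu.2, hv.2, h1, h2, huv, hst, hch⟩
  have htor : t ∉ A ∨ t ∉ B := by
    by_contra h; push_neg at h; exact ht ⟨h.1, h.2⟩
  have hsor : s ∉ A ∨ s ∉ B := by
    by_contra h; push_neg at h; exact hs ⟨h.1, h.2⟩
  have hsAB : s ∈ A ∨ s ∈ B := by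
    by_contra h; push_neg at h
    rcases htor with h' | h'
    · exact killA h.1 h'
    · exact killB h.2 h'
  have htAB : t ∈ A ∨ t ∈ B := by
    by_contra h; push_neg at h
    rcases hsor with h' | h'
    · exact killA h' h.1
    · exact killB h' h.2
  have hxu : x ≠ u := fun h => hxA (h ▸ hu.1)
  have hxv : x ≠ v := fun h => hxA (h ▸ hv.1)
  have hxs : x ≠ s := fun h => by
    rcases hsAB with h' | h'
    · exact hxA (h ▸ h')
    · exact hxB (h ▸ h')
  have hxt : x ≠ t := fun h => by
    rcases htAB with h' | h'
    · exact hxA (h ▸ h')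
    · exact hxB (h ▸ h')
  have hus : u ≠ s := fun h => hs (h ▸ hu)
  have hut : u ≠ t := fun h => ht (h ▸ hu)
  have hvs : v ≠ s := fun h => hs (h ▸ hv)
  have hvt : v ≠ t := fun h => ht (h ▸ hv)
  obtain ⟨b1, b2, b3, b4⟩ := chain4_get hch hus huv hut (Ne.symm hvs) hst hvt
  -- b1 : btw u s v, b2 : btw u s t, b3 : btw u v t, b4 : btw s v t
  rcases C.total (Ne.symm hxu) hxv huv with hside | hside
  · -- btw u x v : replace s by x, contradict the arc missing t
    have c2 : C.btw u x t := C.btw_trans hside b3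
    have c4 : C.btw x v t := by
      have h5 : C.btw v t u := C.cyclic b3
      have h6 : C.btw v u x := C.cyclic (C.cyclic hside)
      exact C.cyclic (C.cyclic (C.btw_trans h5 h6))
    have hch' : C.Chain ![u, x, v, t] := chain4_mk C hside c2 b3 c4
    rcases htor with h' | h'
    · exact hA.2.2 ⟨u, v, x, t, hu.1, hv.1, hxA, h', huv, hxt, hch'⟩
    · exact hB.2.2 ⟨u, v, x, t, hu.2, hv.2, hxB, h', huv, hxt, hch'⟩
  · -- btw v x u : replace t by x, contradict the arc missing s
    have c3 : C.btw u v x := C.cyclic (C.cyclic hside)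
    have c2 : C.btw u s x := C.btw_trans b1 c3
    have c4 : C.btw s v x := by
      have h6 : C.btw v u s := C.cyclic (C.cyclic b1)
      exact C.cyclic (C.cyclic (C.btw_trans hside h6))
    have hch' : C.Chain ![u, s, v, x] := chain4_mk C b1 c2 c3 c4
    rcases hsor with h' | h'
    · exact hA.2.2 ⟨u, v, s, x, hu.1, hv.1, h', hxA, huv, Ne.symm hxs, hch'⟩
    · exact hB.2.2 ⟨u, v, s, x, hu.2, hv.2, h', hxB, huv, Ne.symm hxs, hch'⟩
end

section
/- Let A and B be two arcs of a circularly ordered finite set (X, β). If there exists a point x in B ∖ A, then A ∖ B is an arc or empty. -/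
lemma CircOrder.step {X : Type*} (C : CircOrder X) {p q r s : X}
    (h1 : C.btw p q r) (h2 : C.btw p r s) : C.btw q r s := by
  have h3 : C.btw r p q := C.cyclic (C.cyclic h1)
  have h4 : C.btw r s p := C.cyclic h2
  exact C.cyclic (C.cyclic (C.btw_trans h4 h3))

lemma CircOrder.chain4_of {X : Type*} (C : CircOrder X) {a b c d : X}
    (h1 : C.btw a b c) (h2 : C.btw a c d) : C.Chain ![a, b, c, d] := by
  obtain ⟨hab, hbc, hac⟩ := C.distinct h1
  have h3 : C.btw a b d := C.btw_trans h1 h2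
  have h4 : C.btw b c d := C.step h1 h2
  refine ⟨⟨0, 1, 2, by simpa using hab, by simpa using hbc, by simpa using hac⟩, ?_⟩
  intro i j k hij hjk _ _ _
  fin_cases i <;> fin_cases j <;> fin_cases k <;>
    simp_all

theorem stmt4 {X : Type*} [Fintype X] (C : CircOrder X) (A B : Set X)
    (hA : C.IsArc A) (hB : C.IsArc B) (hx : ∃ x : X, x ∈ B \ A) :
    C.IsArc (A \ B) ∨ A \ B = ∅ := by
  obtain ⟨x, hxB, hxA⟩ := hx
  by_cases hAB : A \ B = ∅
  · exact Or.inr hAB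
  left
  refine ⟨Set.nonempty_iff_ne_empty.2 hAB, ?_, ?_⟩
  · intro h
    have : x ∈ A \ B := h ▸ Set.mem_univ x
    exact hxA this.1
  rintro ⟨u, v, s, t, hu, hv, hs, ht, huv, hst, hch⟩
  -- distinctness
  have hus : u ≠ s := fun h => hs (h ▸ hu)
  have hut : u ≠ t := fun h => ht (h ▸ hu)
  have hvs : v ≠ s := fun h => hs (h ▸ hv)
  have hvt : v ≠ t := fun h => ht (h ▸ hv)
  -- btw facts from the chain
  have busv : C.btw u s v := by
    have := hch.2 0 1 2 (by decide) (by decide) (by simpa using hus)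
      (by simpa using hvs.symm) (by simpa using huv)
    simpa using this
  have bust : C.btw u s t := by
    have := hch.2 0 1 3 (by decide) (by decide) (by simpa using hus)
      (by simpa using hst) (by simpa using hut)
    simpa using this
  have buvt : C.btw u v t := by
    have := hch.2 0 2 3 (by decide) (by decide) (by simpa using huv)
      (by simpa using hvt) (by simpa using hut)
    simpa using this
  have bsvt : C.btw s v t := by
    have := hch.2 1 2 3 (by decide) (by decide) (by simpa using hvs.symm)
      (by simpa using hvt) (by simpa using hst)
    simpa using this
  -- membership info
  have hsAB : s ∉ A ∨ s ∈ B := by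
    by_cases h : s ∈ A
    · right; by_contra h'; exact hs ⟨h, h'⟩
    · exact Or.inl h
  have htAB : t ∉ A ∨ t ∈ B := by
    by_cases h : t ∈ A
    · right; by_contra h'; exact ht ⟨h, h'⟩
    · exact Or.inl h
  by_cases hsB : s ∈ B
  · by_cases htB : t ∈ B
    · -- both s, t in B : contradict that B is an arc via s ⋖ v ⋖ t ⋖ u
      exact hB.2.2 ⟨s, t, v, u, hsB, htB, hv.2, hu.2, hst, huv.symm,
        C.chain4_of bsvt (C.cyclic bust)⟩
    · -- s ∈ B (hence maybe in A), t ∉ B so t ∉ A : case 4 if s ∈ A, else case 2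
      have htA : t ∉ A := htAB.resolve_right htB
      by_cases hsA : s ∈ A
      · -- case 4 : s ∈ A ∩ B, t ∉ A ∪ B; use x
        have hxu : x ≠ u := fun h => hxA (h ▸ hu.1)
        have hxv : x ≠ v := fun h => hxA (h ▸ hv.1)
        have hxs : x ≠ s := fun h => hxA (h ▸ hsA)
        have hxt : x ≠ t := fun h => htB (h ▸ hxB)
        rcases C.total (w := v) hxu.symm hxv huv with h | h
        · -- btw u x v : A-quadruple u ⋖ x ⋖ v ⋖ t
          exact hA.2.2 ⟨u, v, x, t, hu.1, hv.1, hxA, htA, huv, hxt,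
            C.chain4_of h buvt⟩
        · -- btw v x u, i.e. btw u v x : B-quadruple s ⋖ v ⋖ x ⋖ u
          have h' : C.btw u v x := C.cyclic (C.cyclic h)
          exact hB.2.2 ⟨s, x, v, u, hsB, hxB, hv.2, hu.2, hxs.symm, huv.symm,
            C.chain4_of (C.step busv h') (C.cyclic (C.btw_trans busv h'))⟩
      · -- s ∉ A, t ∉ A : contradict that A is an arc
        exact hA.2.2 ⟨u, v, s, t, hu.1, hv.1, hsA, htA, huv, hst, hch⟩
  · have hsA : s ∉ A := hsAB.resolve_right hsB
    by_cases htA : t ∈ A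
    · -- case 3 : s ∉ A ∪ B, t ∈ A (and t ∈ B); use x
      have htB : t ∈ B := htAB.resolve_left (fun h => h htA)
      have hxu : x ≠ u := fun h => hxA (h ▸ hu.1)
      have hxv : x ≠ v := fun h => hxA (h ▸ hv.1)
      have hxs : x ≠ s := fun h => hsB (h ▸ hxB)
      have hxt : x ≠ t := fun h => hxA (h ▸ htA)
      rcases C.total (w := v) hxu.symm hxv huv with h | h
      · -- btw u x v : B-quadruple x ⋖ v ⋖ t ⋖ u
        exact hB.2.2 ⟨x, t, v, u, hxB, htB, hv.2, hu.2, hxt, huv.symm,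
          C.chain4_of (C.step h buvt) (C.cyclic (C.btw_trans h buvt))⟩
      · -- btw u v x : A-quadruple u ⋖ s ⋖ v ⋖ x
        have h' : C.btw u v x := C.cyclic (C.cyclic h)
        exact hA.2.2 ⟨u, v, s, x, hu.1, hv.1, hsA, hxA, huv, hxs.symm,
          C.chain4_of busv h'⟩
    · -- t ∉ A, s ∉ A : contradict that A is an arc
      exact hA.2.2 ⟨u, v, s, t, hu.1, hv.1, hsA, htA, huv, hst, hch⟩
end

section
/- Let (X,d) be a pre-circular Robinson space with compatible circular order β, and let u ⋖ y ⋖ y' ⋖ w ⋖ z ⋖ z' be points with u ≠ w. Then d(u,w) ≥ min{d(y,y'), d(z,z')}. -/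
lemma mkChain4 {X : Type*} (C : CircOrder X) {a b c e : X}
    (hex : ∃ i j k : Fin 4, ![a,b,c,e] i ≠ ![a,b,c,e] j ∧ ![a,b,c,e] j ≠ ![a,b,c,e] k ∧
      ![a,b,c,e] i ≠ ![a,b,c,e] k)
    (h1 : a ≠ b → b ≠ c → a ≠ c → C.btw a b c)
    (h2 : a ≠ b → b ≠ e → a ≠ e → C.btw a b e)
    (h3 : a ≠ c → c ≠ e → a ≠ e → C.btw a c e)
    (h4 : b ≠ c → c ≠ e → b ≠ e → C.btw b c e) :
    C.Chain ![a,b,c,e] := by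
  refine ⟨hex, ?_⟩
  intro i j k hij hjk n1 n2 n3
  fin_cases i <;> fin_cases j <;> fin_cases k <;>
    first
      | exact absurd hij (by decide)
      | exact absurd hjk (by decide)
      | exact h1 n1 n2 n3
      | exact h2 n1 n2 n3
      | exact h3 n1 n2 n3
      | exact h4 n1 n2 n3

theorem stmt5 {X : Type*} [Fintype X] (d : X → X → ℝ) (hd : Dissim d)
    (C : CircOrder X) (hc : preCompat C d)
    (u y y' w z z' : X) (huw : u ≠ w)
    (hch : C.Chain ![u, y, y', w, z, z']) :
    min (d y y') (d z z') ≤ d u w := by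
  obtain ⟨hsym, hnn, hzero⟩ := hd
  by_contra hcon
  push_neg at hcon
  have hp : d u w < d y y' := lt_of_lt_of_le hcon (min_le_left _ _)
  have hq : d u w < d z z' := lt_of_lt_of_le hcon (min_le_right _ _)
  have hduw0 : 0 ≤ d u w := hnn u w
  have hyy' : y ≠ y' := by
    intro h
    rw [(hzero y y').mpr h] at hp
    linarith
  have hzz' : z ≠ z' := by
    intro h
    rw [(hzero z z').mpr h] at hq
    linarith
  have bt : ∀ i j k : Fin 6, i < j → j < k →
      ![u,y,y',w,z,z'] i ≠ ![u,y,y',w,z,z'] j →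
      ![u,y,y',w,z,z'] j ≠ ![u,y,y',w,z,z'] k →
      ![u,y,y',w,z,z'] i ≠ ![u,y,y',w,z,z'] k →
      C.btw (![u,y,y',w,z,z'] i) (![u,y,y',w,z,z'] j) (![u,y,y',w,z,z'] k) := hch.2
  -- u ≠ y'
  have NE1 : u ≠ y' := by
    intro h
    have hyw : y = w := by
      by_contra hyw
      have huy : u ≠ y := fun h' => hyy' (h'.symm.trans h)
      have b1 : C.btw y y' w :=
        bt 1 2 3 (by decide) (by decide) hyy' (fun h'' => huw (h.trans h'')) hyw
      have b2 : C.btw u y w := bt 0 1 3 (by decide) (by decide) huy hyw huw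
      rw [h] at b2
      exact C.asymm b1 (C.cyclic (C.cyclic b2))
    have : d y y' = d u w := by rw [hyw, ← h, hsym]
    linarith
  -- w ≠ z'
  have NE2 : w ≠ z' := by
    intro h
    have hwz : w ≠ z := fun h' => hzz' (h'.symm.trans h)
    have huz : u = z := by
      by_contra huz
      have b1 : C.btw u w z := bt 0 3 4 (by decide) (by decide) huw hwz huz
      have b2 : C.btw u z z' :=
        bt 0 4 5 (by decide) (by decide) huz hzz' (fun h'' => huw (h''.trans h.symm))
      rw [← h] at b2
      exact C.asymm b1 (C.cyclic b2)
    have : d z z' = d u w := by rw [← huz, ← h]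
    linarith
  -- ARG1
  have arg1 : d u y' < d y y' → d u y' < d z z' → False := by
    intro h1 h2
    have huy : u ≠ y := by
      intro h
      rw [h] at h1
      exact lt_irrefl _ h1
    have ch1 : C.Chain ![u,y,y',z'] :=
      mkChain4 C ⟨0, 1, 2, huy, hyy', NE1⟩
        (bt 0 1 2 (by decide) (by decide))
        (bt 0 1 5 (by decide) (by decide))
        (bt 0 2 5 (by decide) (by decide))
        (bt 1 2 5 (by decide) (by decide))
    have s1 := hc u y y' z' ch1
    have key1 : d z' y' ≤ d u y' := by
      have hA : ¬ max (d u y) (d y y') ≤ d u y' :=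
        not_le.mpr (lt_of_lt_of_le h1 (le_max_right _ _))
      have := (min_le_iff.mp s1).resolve_left hA
      exact le_trans (le_max_right _ _) this
    have hyz : y ≠ z := by
      intro h
      have b1 : C.btw u y y' := bt 0 1 2 (by decide) (by decide) huy hyy' NE1
      have b2 : C.btw u y' z := bt 0 2 4 (by decide) (by decide) NE1
        (fun h' => hyy' (h'.trans h.symm).symm) (fun h' => huy (h'.trans h.symm))
      rw [← h] at b2
      exact C.asymm b1 (C.cyclic b2)
    have hy'z : y' ≠ z := by
      intro h
      rw [← h] at h2
      have := hsym z' y'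
      linarith
    have hyz' : y ≠ z' := by
      intro h
      rw [h] at h1
      linarith
    have hy'z' : y' ≠ z' := by
      intro h
      have b1 : C.btw y y' z := bt 1 2 4 (by decide) (by decide) hyy' hy'z hyz
      have b2 : C.btw y z z' := bt 1 4 5 (by decide) (by decide) hyz hzz' hyz'
      rw [← h] at b2
      exact C.asymm b1 (C.cyclic b2)
    have ch2 : C.Chain ![y',z,z',y] :=
      mkChain4 C ⟨0, 1, 2, hy'z, hzz', hy'z'⟩
        (fun _ _ _ => bt 2 4 5 (by decide) (by decide) hy'z hzz' hy'z')
        (fun _ _ _ => C.cyclic (bt 1 2 4 (by decide) (by decide) hyy' hy'z hyz))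
        (fun _ _ _ => C.cyclic (bt 1 2 5 (by decide) (by decide) hyy' hy'z' hyz'))
        (fun _ _ _ => C.cyclic (bt 1 4 5 (by decide) (by decide) hyz hzz' hyz'))
    have s2 := hc y' z z' y ch2
    have hmin : min (d y y') (d z z') ≤ d z' y' := by
      have hle : min (d y y') (d z z') ≤
          min (max (d y' z) (d z z')) (max (d y' y) (d y z')) := by
        refine le_min ?_ ?_
        · exact le_trans (min_le_right _ _) (le_max_right _ _)
        · refine le_trans (min_le_left _ _) ?_
          rw [hsym y y']
          exact le_max_left _ _
      have := le_trans hle s2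
      rw [hsym y' z'] at this
      exact this
    have := lt_min h1 h2
    linarith
  -- ARG2
  have arg2 : d w z' < d z z' → d w z' < d y y' → False := by
    intro h1 h2
    have hwz : w ≠ z := by
      intro h
      rw [h] at h1
      exact lt_irrefl _ h1
    have ch1 : C.Chain ![z',y',w,z] :=
      mkChain4 C ⟨0, 2, 3, NE2.symm, hwz, hzz'.symm⟩
        (fun n1 n2 n3 => C.cyclic (C.cyclic (bt 2 3 5 (by decide) (by decide) n2 n3.symm n1.symm)))
        (fun n1 n2 n3 => C.cyclic (C.cyclic (bt 2 4 5 (by decide) (by decide) n2 n3.symm n1.symm)))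
        (fun n1 n2 n3 => C.cyclic (C.cyclic (bt 3 4 5 (by decide) (by decide) n2 n3.symm n1.symm)))
        (bt 2 3 4 (by decide) (by decide))
    have s1 := hc z' y' w z ch1
    have key1 : d z' y' ≤ d w z' := by
      have hzw : d z' w = d w z' := hsym z' w
      have hB : ¬ max (d z' z) (d z w) ≤ d z' w := by
        rw [hzw]
        refine not_le.mpr (lt_of_lt_of_le ?_ (le_max_left _ _))
        rw [hsym z' z]
        exact h1
      have := (min_le_iff.mp s1).resolve_right hB
      rw [hzw] at this
      exact le_trans (le_max_left _ _) this
    have hyz : y ≠ z := by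
      intro h
      have b1 : C.btw w z z' := bt 3 4 5 (by decide) (by decide) hwz hzz' NE2
      have b2 : C.btw y w z' := bt 1 3 5 (by decide) (by decide)
        (fun h' => hwz (h'.symm.trans h)) NE2 (fun h'' => hzz' (h.symm.trans h''))
      rw [h] at b2
      exact C.asymm b2 (C.cyclic (C.cyclic b1))
    have hy'z : y' ≠ z := by
      intro h
      have : d z' y' = d z z' := by rw [h, hsym]
      linarith
    have hyz' : y ≠ z' := by
      intro h
      have : d z' y' = d y y' := by rw [← h]
      linarith
    have hy'z' : y' ≠ z' := by
      intro h
      have b1 : C.btw y y' z := bt 1 2 4 (by decide) (by decide) hyy' hy'z hyz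
      have b2 : C.btw y z z' := bt 1 4 5 (by decide) (by decide) hyz hzz' hyz'
      rw [← h] at b2
      exact C.asymm b1 (C.cyclic b2)
    have ch2 : C.Chain ![z',y,y',z] :=
      mkChain4 C ⟨0, 1, 2, hyz'.symm, hyy', hy'z'.symm⟩
        (fun _ _ _ => C.cyclic (C.cyclic (bt 1 2 5 (by decide) (by decide) hyy' hy'z' hyz')))
        (fun _ _ _ => C.cyclic (C.cyclic (bt 1 4 5 (by decide) (by decide) hyz hzz' hyz')))
        (fun _ _ _ => C.cyclic (C.cyclic (bt 2 4 5 (by decide) (by decide) hy'z hzz' hy'z')))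
        (fun _ _ _ => bt 1 2 4 (by decide) (by decide) hyy' hy'z hyz)
    have s2 := hc z' y y' z ch2
    have hmin : min (d y y') (d z z') ≤ d z' y' := by
      have hle : min (d y y') (d z z') ≤
          min (max (d z' y) (d y y')) (max (d z' z) (d z y')) := by
        refine le_min ?_ ?_
        · exact le_trans (min_le_left _ _) (le_max_right _ _)
        · refine le_trans (min_le_right _ _) ?_
          rw [hsym z' z]
          exact le_max_left _ _
      exact le_trans hle s2
    have := lt_min h2 h1
    linarith
  -- main dispatch
  by_cases hy'w : y' = w
  · have e : d u y' = d u w := by rw [hy'w]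
    exact arg1 (by rw [e]; exact hp) (by rw [e]; exact hq)
  by_cases hz'u : z' = u
  · have e : d w z' = d u w := by rw [hz'u, hsym w u]
    exact arg2 (by rw [e]; exact hq) (by rw [e]; exact hp)
  · have hz'u' : z' ≠ u := hz'u
    have ch : C.Chain ![u,y',w,z'] :=
      mkChain4 C ⟨0, 1, 2, NE1, hy'w, huw⟩
        (bt 0 2 3 (by decide) (by decide))
        (bt 0 2 5 (by decide) (by decide))
        (bt 0 3 5 (by decide) (by decide))
        (bt 2 3 5 (by decide) (by decide))
    have s := hc u y' w z' ch
    rcases min_le_iff.mp s with hs | hs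
    · have h1 : d u y' ≤ d u w := le_trans (le_max_left _ _) hs
      exact arg1 (lt_of_le_of_lt h1 hp) (lt_of_le_of_lt h1 hq)
    · have h1 : d w z' ≤ d u w := by
        rw [hsym w z']
        exact le_trans (le_max_right _ _) hs
      exact arg2 (lt_of_le_of_lt h1 hq) (lt_of_le_of_lt h1 hp)
end

section
/- A dissimilarity space (X,d) is pre-circular Robinson if and only if it is circular Robinson. More precisely, a circular order β on X is compatible in the pre-circular Robinson sense (every quadruple x ⋖ y ⋖ z ⋖ t satisfies d(x,z) ≥ min{max{d(x,y), d(y,z)}, max{d(x,t), d(t,z)}}) if and only if β is compatible in the circular Robinson sense (for every pair x,y ∈ X, at least one of the two arcs between x and y, with the linear order induced by β, is a Robinson space). -/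
section AuxStmt8

namespace CircOrder
variable {X : Type*} (C : CircOrder X)

lemma trans3 {a b c d : X} (h1 : C.btw a b c) (h2 : C.btw a c d) : C.btw b c d :=
  C.cyclic (C.cyclic (C.btw_trans (C.cyclic h2) (C.cyclic (C.cyclic h1))))

lemma order4a {x a y s : X} (h1 : C.btw x a y) (h2 : C.btw y s x) : C.btw a y s :=
  C.cyclic (C.cyclic (C.btw_trans h2 (C.cyclic (C.cyclic h1))))

lemma order4b {x a y s : X} (h1 : C.btw x a y) (h2 : C.btw y s x) : C.btw x a s :=
  C.cyclic (C.trans3 h2 (C.cyclic (C.cyclic h1)))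

lemma no3 {n : ℕ} {p : Fin n → X} (h : C.Chain p) {a b : X}
    (hall : ∀ i, p i = a ∨ p i = b) : False := by
  obtain ⟨i, j, k, h1, h2, h3⟩ := h.1
  rcases hall i with hi|hi <;> rcases hall j with hj|hj <;> rcases hall k with hk|hk <;>
    simp_all

lemma chain4_intro {a b c d : X}
    (hab : a ≠ b) (hac : a ≠ c) (had : a ≠ d) (hbc : b ≠ c) (hbd : b ≠ d) (hcd : c ≠ d)
    (h1 : C.btw a b c) (h2 : C.btw a b d) (h3 : C.btw a c d) (h4 : C.btw b c d) :
    C.Chain ![a,b,c,d] := by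
  refine ⟨⟨0, 1, 2, hab, hbc, hac⟩, ?_⟩
  intro i j k hij hjk e1 e2 e3
  fin_cases i <;> fin_cases j <;> fin_cases k <;> simp_all

lemma chain5_dup {a b c : X} (hab : a ≠ b) (hbc : b ≠ c) (hac : a ≠ c)
    (h : C.btw a b c) : C.Chain ![a,a,b,c,c] := by
  refine ⟨⟨0, 2, 3, hab, hbc, hac⟩, ?_⟩
  intro i j k hij hjk e1 e2 e3
  fin_cases i <;> fin_cases j <;> fin_cases k <;> simp_all

lemma chain5_distinct {x u v w y : X} (h : C.Chain ![x,u,v,w,y])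
    (hxy : x ≠ y) (huv : u ≠ v) (hvw : v ≠ w) :
    v ≠ x ∧ v ≠ y ∧ u ≠ y ∧ w ≠ x ∧ u ≠ w := by
  have hvx : v ≠ x := by
    intro e
    by_cases huw : u = w
    · by_cases huy : u = y
      · refine C.no3 h (a := x) (b := u) ?_
        intro i; fin_cases i <;> simp [← e, ← huw, ← huy]
      · have b1 : C.btw u v y := h.2 1 2 4 (by decide) (by decide) huv
          (e ▸ hxy) huy
        have b2 : C.btw x u y := h.2 0 1 4 (by decide) (by decide)
          (fun hh => huv (e ▸ hh.symm)) huy hxy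
        rw [← e] at b2
        exact C.asymm (C.cyclic b1) (C.cyclic b2)
    · have b1 : C.btw u v w := h.2 1 2 3 (by decide) (by decide) huv hvw huw
      have b2 : C.btw x u w := h.2 0 1 3 (by decide) (by decide)
        (fun hh => huv (e ▸ hh.symm)) huw (fun hh => hvw (e ▸ hh))
      rw [← e] at b2
      exact C.asymm b1 (C.cyclic (C.cyclic b2))
  have hvy : v ≠ y := by
    intro e
    by_cases hwx : w = x
    · by_cases hux : u = x
      · refine C.no3 h (a := x) (b := v) ?_
        intro i; fin_cases i <;> simp [← e, hwx, hux]
      · have b1 : C.btw x u v := h.2 0 1 2 (by decide) (by decide)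
          (Ne.symm hux) huv (Ne.symm hvx)
        have b2 : C.btw u w y := h.2 1 3 4 (by decide) (by decide)
          (fun hh => hux (hh.trans hwx)) (fun hh => hxy (hwx ▸ hh)) (e ▸ huv)
        rw [hwx, ← e] at b2
        exact C.asymm b1 (C.cyclic (C.cyclic b2))
    · have b1 : C.btw x v w := h.2 0 2 3 (by decide) (by decide)
        (Ne.symm hvx) hvw (Ne.symm hwx)
      have b2 : C.btw x w y := h.2 0 3 4 (by decide) (by decide)
        (Ne.symm hwx) (fun hh => hvw (e ▸ hh.symm)) hxy
      rw [← e] at b2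
      exact C.asymm b1 (C.cyclic b2)
  have huy : u ≠ y := by
    intro e
    have b1 : C.btw x u v := h.2 0 1 2 (by decide) (by decide)
      (fun hh => hxy (hh.trans e)) huv (Ne.symm hvx)
    have b2 : C.btw x v y := h.2 0 2 4 (by decide) (by decide)
      (Ne.symm hvx) hvy hxy
    rw [← e] at b2
    exact C.asymm b1 (C.cyclic b2)
  have hwx : w ≠ x := by
    intro e
    have b1 : C.btw v w y := h.2 2 3 4 (by decide) (by decide)
      hvw (fun hh => hxy (e ▸ hh)) hvy
    have b2 : C.btw x v y := h.2 0 2 4 (by decide) (by decide)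
      (Ne.symm hvx) hvy hxy
    rw [← e] at b2
    exact C.asymm b2 (C.cyclic (C.cyclic b1))
  have huw : u ≠ w := by
    intro e
    have b1 : C.btw x u v := h.2 0 1 2 (by decide) (by decide)
      (fun hh => hwx (e ▸ hh.symm)) huv (Ne.symm hvx)
    have b2 : C.btw x v w := h.2 0 2 3 (by decide) (by decide)
      (Ne.symm hvx) hvw (Ne.symm hwx)
    rw [← e] at b2
    exact C.asymm b1 (C.cyclic b2)
  exact ⟨hvx, hvy, huy, hwx, huw⟩

lemma main_ins {x u v w y : X} (h : C.Chain ![x,u,v,w,y])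
    (hxy : x ≠ y) (huv : u ≠ v) (hvw : v ≠ w) (s : X)
    (hs : s = y ∨ s = x ∨ C.btw y s x) :
    (s ≠ u → s ≠ v → C.btw u v s) ∧ (s ≠ u → s ≠ w → C.btw u w s) ∧
      (s ≠ v → s ≠ w → C.btw v w s) := by
  obtain ⟨hvx, hvy, huy, hwx, huw⟩ := C.chain5_distinct h hxy huv hvw
  have bxvy : C.btw x v y := h.2 0 2 4 (by decide) (by decide) (Ne.symm hvx) hvy hxy
  have buvy : C.btw u v y := h.2 1 2 4 (by decide) (by decide) huv hvy huy
  have bxvw : C.btw x v w := h.2 0 2 3 (by decide) (by decide) (Ne.symm hvx) hvw (Ne.symm hwx)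
  have bxuv : u ≠ x → C.btw x u v := fun hux =>
    h.2 0 1 2 (by decide) (by decide) (Ne.symm hux) huv (Ne.symm hvx)
  have bxuw : u ≠ x → C.btw x u w := fun hux =>
    h.2 0 1 3 (by decide) (by decide) (Ne.symm hux) huw (Ne.symm hwx)
  have bxuy : u ≠ x → C.btw x u y := fun hux =>
    h.2 0 1 4 (by decide) (by decide) (Ne.symm hux) huy hxy
  have bxwy : w ≠ y → C.btw x w y := fun hwy =>
    h.2 0 3 4 (by decide) (by decide) (Ne.symm hwx) hwy hxy
  have buwy : w ≠ y → C.btw u w y := fun hwy =>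
    h.2 1 3 4 (by decide) (by decide) huw hwy huy
  have bvwy : w ≠ y → C.btw v w y := fun hwy =>
    h.2 2 3 4 (by decide) (by decide) hvw hwy hvy
  refine ⟨?_, ?_, ?_⟩
  · intro hsu hsv
    rcases hs with rfl|rfl|hs
    · exact buvy
    · exact C.cyclic (bxuv (Ne.symm hsu))
    · have hxvs : C.btw x v s := C.order4b bxvy hs
      by_cases hux : u = x
      · rw [hux]; exact hxvs
      · exact C.trans3 (bxuv hux) hxvs
  · intro hsu hsw
    rcases hs with rfl|rfl|hs
    · exact buwy (Ne.symm hsw)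
    · exact C.cyclic (bxuw (Ne.symm hsu))
    · by_cases hwy : w = y
      · rw [hwy]
        by_cases hux : u = x
        · rw [hux]; exact C.cyclic (C.cyclic hs)
        · exact C.order4a (bxuy hux) hs
      · have hxws : C.btw x w s := C.order4b (bxwy hwy) hs
        by_cases hux : u = x
        · rw [hux]; exact hxws
        · exact C.trans3 (bxuw hux) hxws
  · intro hsv hsw
    rcases hs with rfl|rfl|hs
    · exact bvwy (Ne.symm hsw)
    · exact C.cyclic bxvw
    · by_cases hwy : w = y
      · rw [hwy]; exact C.order4a bxvy hs
      · exact C.trans3 bxvw (C.order4b (bxwy hwy) hs)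

end CircOrder

end AuxStmt8
theorem stmt8 {X : Type*} [Fintype X] (d : X → X → ℝ) (hd : Dissim d)
    (C : CircOrder X) :
    preCompat C d ↔
      ∀ x y : X, x ≠ y → RobinsonOnArc C d x y ∨ RobinsonOnArc C d y x := by
  obtain ⟨hsym, hnn, hzero⟩ := hd
  have aux1 : ∀ {m1 m2 a : ℝ}, min m1 m2 ≤ a → a < m1 → m2 ≤ a := by
    intro m1 m2 a h1 h2
    rcases min_cases m1 m2 with ⟨he, _⟩|⟨he, _⟩ <;> linarith
  have aux2 : ∀ {m1 m2 a : ℝ}, min m1 m2 ≤ a → a < m2 → m1 ≤ a := by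
    intro m1 m2 a h1 h2
    rcases min_cases m1 m2 with ⟨he, _⟩|⟨he, _⟩ <;> linarith
  constructor
  · intro hpre x y hxy
    by_contra hcon
    rw [not_or] at hcon
    obtain ⟨hA, hB⟩ := hcon
    simp only [RobinsonOnArc] at hA hB
    push_neg at hA hB
    obtain ⟨u, v, w, hch1, viol1⟩ := hA
    obtain ⟨u', v', w', hch2, viol2⟩ := hB
    have huv : u ≠ v := by
      intro e; rw [e] at viol1
      rw [(hzero v v).mpr rfl, max_eq_right (hnn v w)] at viol1
      exact lt_irrefl _ viol1
    have hvw : v ≠ w := by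
      intro e; rw [← e] at viol1
      rw [(hzero v v).mpr rfl, max_eq_left (hnn u v)] at viol1
      exact lt_irrefl _ viol1
    have hu'v' : u' ≠ v' := by
      intro e; rw [e] at viol2
      rw [(hzero v' v').mpr rfl, max_eq_right (hnn v' w')] at viol2
      exact lt_irrefl _ viol2
    have hv'w' : v' ≠ w' := by
      intro e; rw [← e] at viol2
      rw [(hzero v' v').mpr rfl, max_eq_left (hnn u' v')] at viol2
      exact lt_irrefl _ viol2
    obtain ⟨hvx, hvy, huy, hwx, huw⟩ := C.chain5_distinct hch1 hxy huv hvw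
    obtain ⟨hv'y, hv'x, hu'x, hw'y, hu'w'⟩ :=
      C.chain5_distinct hch2 (Ne.symm hxy) hu'v' hv'w'
    have bxvy : C.btw x v y := hch1.2 0 2 4 (by decide) (by decide) (Ne.symm hvx) hvy hxy
    have byv'x : C.btw y v' x :=
      hch2.2 0 2 4 (by decide) (by decide) (Ne.symm hv'y) hv'x (Ne.symm hxy)
    have msu' : u' = y ∨ u' = x ∨ C.btw y u' x := by
      by_cases hh : u' = y
      · exact Or.inl hh
      · exact Or.inr (Or.inr
          (hch2.2 0 1 4 (by decide) (by decide) (Ne.symm hh) hu'x (Ne.symm hxy)))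
    have msv' : v' = y ∨ v' = x ∨ C.btw y v' x := Or.inr (Or.inr byv'x)
    have msw' : w' = y ∨ w' = x ∨ C.btw y w' x := by
      by_cases hh : w' = x
      · exact Or.inr (Or.inl hh)
      · exact Or.inr (Or.inr
          (hch2.2 0 3 4 (by decide) (by decide) (Ne.symm hw'y) hh (Ne.symm hxy)))
    have msu : u = x ∨ u = y ∨ C.btw x u y := by
      by_cases hh : u = x
      · exact Or.inl hh
      · exact Or.inr (Or.inr
          (hch1.2 0 1 4 (by decide) (by decide) (Ne.symm hh) huy hxy))
    have msv : v = x ∨ v = y ∨ C.btw x v y := Or.inr (Or.inr bxvy)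
    have msw : w = x ∨ w = y ∨ C.btw x w y := by
      by_cases hh : w = y
      · exact Or.inr (Or.inl hh)
      · exact Or.inr (Or.inr
          (hch1.2 0 3 4 (by decide) (by decide) (Ne.symm hwx) hh hxy))
    have nuu' : u ≠ u' := by
      intro e
      rcases msu' with hh|hh|hh
      · exact huy (e.trans hh)
      · exact hu'x hh
      · rw [← e] at hh
        rcases msu with h2|h2|h2
        · exact (C.distinct hh).2.1 h2
        · exact huy h2
        · exact C.asymm h2 hh
    have nvu' : v ≠ u' := by
      intro e
      rcases msu' with hh|hh|hh
      · exact hvy (e.trans hh)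
      · exact hvx (e.trans hh)
      · rw [← e] at hh; exact C.asymm bxvy hh
    have nvv' : v ≠ v' := by
      intro e
      rw [← e] at byv'x; exact C.asymm bxvy byv'x
    have nvw' : v ≠ w' := by
      intro e
      rcases msw' with hh|hh|hh
      · exact hvy (e.trans hh)
      · exact hvx (e.trans hh)
      · rw [← e] at hh; exact C.asymm bxvy hh
    have nuv' : u ≠ v' := by
      intro e
      rcases msu with hh|hh|hh
      · exact hv'x (e.symm.trans hh)
      · exact hv'y (e.symm.trans hh)
      · rw [e] at hh; exact C.asymm hh byv'x
    have nwv' : w ≠ v' := by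
      intro e
      rcases msw with hh|hh|hh
      · exact hv'x (e.symm.trans hh)
      · exact hv'y (e.symm.trans hh)
      · rw [e] at hh; exact C.asymm hh byv'x
    have nww' : w ≠ w' := by
      intro e
      rcases msw' with hh|hh|hh
      · exact hw'y hh
      · exact hwx (e.trans hh)
      · rw [← e] at hh
        rcases msw with h2|h2|h2
        · exact (C.distinct hh).2.1 h2
        · exact (C.distinct hh).1 h2.symm
        · exact C.asymm h2 hh
    obtain ⟨i1uv_u', i1uw_u', i1vw_u'⟩ := C.main_ins hch1 hxy huv hvw u' msu'
    obtain ⟨i1uv_v', i1uw_v', i1vw_v'⟩ := C.main_ins hch1 hxy huv hvw v' msv'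
    obtain ⟨i1uv_w', i1uw_w', i1vw_w'⟩ := C.main_ins hch1 hxy huv hvw w' msw'
    obtain ⟨i2uv_u, i2uw_u, i2vw_u⟩ := C.main_ins hch2 (Ne.symm hxy) hu'v' hv'w' u msu
    obtain ⟨i2uv_v, i2uw_v, i2vw_v⟩ := C.main_ins hch2 (Ne.symm hxy) hu'v' hv'w' v msv
    obtain ⟨i2uv_w, i2uw_w, i2vw_w⟩ := C.main_ins hch2 (Ne.symm hxy) hu'v' hv'w' w msw
    have buvw : C.btw u v w := hch1.2 1 2 3 (by decide) (by decide) huv hvw huw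
    have bu'v'w' : C.btw u' v' w' :=
      hch2.2 1 2 3 (by decide) (by decide) hu'v' hv'w' hu'w'
    have b124 : C.btw u v u' := i1uv_u' (Ne.symm nuu') (Ne.symm nvu')
    have b125 : C.btw u v v' := i1uv_v' (Ne.symm nuv') (Ne.symm nvv')
    have b135 : C.btw u w v' := i1uw_v' (Ne.symm nuv') (Ne.symm nwv')
    have b235 : C.btw v w v' := i1vw_v' (Ne.symm nvv') (Ne.symm nwv')
    have b236 : C.btw v w w' := i1vw_w' (Ne.symm nvw') (Ne.symm nww')
    have b451 : C.btw u' v' u := i2uv_u nuu' nuv'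
    have b452 : C.btw u' v' v := i2uv_v nvu' nvv'
    have b462 : C.btw u' w' v := i2uw_v nvu' nvw'
    have b562 : C.btw v' w' v := i2vw_v nvv' nvw'
    have b563 : C.btw v' w' w := i2vw_w nwv' nww'
    have Q1 : C.Chain ![u,v,w,v'] :=
      C.chain4_intro huv huw nuv' hvw nvv' nwv' buvw b125 b135 b235
    have E1 := hpre u v w v' Q1
    have hm1 : max (d u v') (d v' w) ≤ d u w := aux1 E1 viol1
    have e15 : d u v' ≤ d u w := le_trans (le_max_left _ _) hm1
    have e53 : d v' w ≤ d u w := le_trans (le_max_right _ _) hm1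
    have Q2 : C.Chain ![u',v',w',v] :=
      C.chain4_intro hu'v' hu'w' (Ne.symm nvu') hv'w' (Ne.symm nvv') (Ne.symm nvw')
        bu'v'w' b452 b462 b562
    have E2 := hpre u' v' w' v Q2
    have hm2 : max (d u' v) (d v w') ≤ d u' w' := aux1 E2 viol2
    have e42 : d u' v ≤ d u' w' := le_trans (le_max_left _ _) hm2
    have e26 : d v w' ≤ d u' w' := le_trans (le_max_right _ _) hm2
    have euu'a : d u u' ≤ d u w := by
      by_cases hg : w = u'
      · rw [← hg]
      · have b134 : C.btw u w u' := i1uw_u' (Ne.symm nuu') (fun hh => hg hh.symm)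
        have b234 : C.btw v w u' := i1vw_u' (Ne.symm nvu') (fun hh => hg hh.symm)
        have Q3 : C.Chain ![u,v,w,u'] :=
          C.chain4_intro huv huw nuu' hvw nvu' hg buvw b124 b134 b234
        have E3 := hpre u v w u' Q3
        exact le_trans (le_max_left _ _) (aux1 E3 viol1)
    have euu'b : d u u' ≤ d u' w' := by
      by_cases hg : u = w'
      · rw [hg, hsym w' u']
      · have b461 : C.btw u' w' u := i2uw_u nuu' hg
        have b561 : C.btw v' w' u := i2vw_u nuv' hg
        have Q4 : C.Chain ![u',v',w',u] :=
          C.chain4_intro hu'v' hu'w' (Ne.symm nuu') hv'w' (Ne.symm nuv')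
            (fun hh => hg hh.symm) bu'v'w' b451 b461 b561
        have E4 := hpre u' v' w' u Q4
        calc d u u' = d u' u := hsym u u'
          _ ≤ _ := le_trans (le_max_left _ _) (aux1 E4 viol2)
    have eww'a : d w w' ≤ d u w := by
      by_cases hg : u = w'
      · rw [← hg, hsym w u]
      · have b126 : C.btw u v w' := i1uv_w' (fun hh => hg hh.symm) (Ne.symm nvw')
        have b136 : C.btw u w w' := i1uw_w' (fun hh => hg hh.symm) (Ne.symm nww')
        have Q5 : C.Chain ![u,v,w,w'] :=
          C.chain4_intro huv huw hg hvw nvw' nww' buvw b126 b136 b236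
        have E5 := hpre u v w w' Q5
        calc d w w' = d w' w := hsym _ _
          _ ≤ _ := le_trans (le_max_right _ _) (aux1 E5 viol1)
    have eww'b : d w w' ≤ d u' w' := by
      by_cases hg : w = u'
      · rw [hg]
      · have b453 : C.btw u' v' w := i2uv_w hg nwv'
        have b463 : C.btw u' w' w := i2uw_w hg nww'
        have Q6 : C.Chain ![u',v',w',w] :=
          C.chain4_intro hu'v' hu'w' (fun hh => hg hh.symm) hv'w' (Ne.symm nwv')
            (Ne.symm nww') bu'v'w' b453 b463 b563
        have E6 := hpre u' v' w' w Q6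
        exact le_trans (le_max_right _ _) (aux1 E6 viol2)
    rcases lt_max_iff.mp viol1 with h12 | h23
    · rcases lt_max_iff.mp viol2 with h45 | h56
      · -- case (i): d u w < d u v, d u' w' < d u' v'
        have b7a : C.btw u u' v' := C.cyclic (C.cyclic b451)
        have b7b : C.btw v u' v' := C.cyclic (C.cyclic b452)
        have Q7 : C.Chain ![u,v,u',v'] :=
          C.chain4_intro huv nuu' nuv' nvu' nvv' hu'v' b124 b125 b7a b7b
        have E7 := hpre u v u' v' Q7
        have l1 : d u v ≤ max (d u v) (d v u') := le_max_left _ _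
        have l2 : d v' u' ≤ max (d u v') (d v' u') := le_max_right _ _
        have l3 : d v' u' = d u' v' := hsym _ _
        rcases min_cases (max (d u v) (d v u')) (max (d u v') (d v' u')) with
          ⟨he, _⟩|⟨he, _⟩ <;> linarith
      · -- case (iii): d u w < d u v, d u' w' < d v' w'
        by_cases hg : u = w'
        · have t1 : d u v ≤ d u' w' := by
            rw [hg, hsym w' v]; exact e26
          have t2 : d u' w' ≤ d u w := by
            rw [← hg]
            calc d u' u = d u u' := hsym _ _
              _ ≤ d u w := euu'a
          linarith
        · have b126 : C.btw u v w' := i1uv_w' (fun hh => hg hh.symm) (Ne.symm nvw')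
          have b561 : C.btw v' w' u := i2vw_u nuv' hg
          have b9a : C.btw u v' w' := C.cyclic (C.cyclic b561)
          have b9b : C.btw v v' w' := C.cyclic (C.cyclic b562)
          have Q9 : C.Chain ![u,v,v',w'] :=
            C.chain4_intro huv nuv' hg nvv' nvw' hv'w' b125 b126 b9a b9b
          have E9 := hpre u v v' w' Q9
          have st1 : d u v' < max (d u v) (d v v') :=
            lt_of_le_of_lt e15 (lt_of_lt_of_le h12 (le_max_left _ _))
          have hL := aux1 E9 st1
          have L : d v' w' ≤ d u w := by
            calc d v' w' = d w' v' := hsym _ _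
              _ ≤ d u v' := le_trans (le_max_right _ _) hL
              _ ≤ d u w := e15
          have b10a : C.btw w' u v := C.cyclic (C.cyclic b126)
          have b10b : C.btw w' u v' := C.cyclic b561
          have b10c : C.btw w' v v' := C.cyclic b562
          have Q10 : C.Chain ![w',u,v,v'] :=
            C.chain4_intro (fun hh => hg hh.symm) (Ne.symm nvw') (Ne.symm hv'w')
              huv nuv' nvv' b10a b10b b10c b125
          have E10 := hpre w' u v v' Q10
          have st2 : d w' v < max (d w' v') (d v' v) := by
            have t : d w' v ≤ d u' w' := by rw [hsym w' v]; exact e26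
            have t2 : d u' w' < d w' v' := by rw [hsym w' v']; exact h56
            exact lt_of_le_of_lt t (lt_of_lt_of_le t2 (le_max_left _ _))
          have hM := aux2 E10 st2
          have M : d u v ≤ d u' w' := by
            calc d u v ≤ d w' v := le_trans (le_max_right _ _) hM
              _ = d v w' := hsym _ _
              _ ≤ d u' w' := e26
          linarith
    · rcases lt_max_iff.mp viol2 with h45 | h56
      · -- case (iv): d u w < d v w, d u' w' < d u' v'
        by_cases hg : w = u'
        · have t1 : d v w ≤ d u' w' := by
            rw [hsym v w, hg]; exact e42
          have t2 : d u' v' ≤ d u w := by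
            rw [← hg, hsym w v']; exact e53
          linarith
        · have b453 : C.btw u' v' w := i2uv_w hg nwv'
          have b234 : C.btw v w u' := i1vw_u' (Ne.symm nvu') (fun hh => hg hh.symm)
          have b11a : C.btw u' v w := C.cyclic (C.cyclic b234)
          have b11b : C.btw v' v w := C.cyclic (C.cyclic b235)
          have Q11 : C.Chain ![u',v',v,w] :=
            C.chain4_intro hu'v' (Ne.symm nvu') (fun hh => hg hh.symm) (Ne.symm nvv')
              (Ne.symm nwv') hvw b452 b453 b11a b11b
          have E11 := hpre u' v' v w Q11
          have st1 : d u' v < max (d u' v') (d v' v) :=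
            lt_of_le_of_lt e42 (lt_of_lt_of_le h45 (le_max_left _ _))
          have hL := aux1 E11 st1
          have L : d v w ≤ d u' w' := by
            calc d v w = d w v := hsym _ _
              _ ≤ d u' v := le_trans (le_max_right _ _) hL
              _ ≤ d u' w' := e42
          have b12a : C.btw w u' v' := C.cyclic (C.cyclic b453)
          have b12b : C.btw w u' v := C.cyclic b234
          have b12c : C.btw w v' v := C.cyclic b235
          have Q12 : C.Chain ![w,u',v',v] :=
            C.chain4_intro hg nwv' (Ne.symm hvw) hu'v' (Ne.symm nvu') (Ne.symm nvv')
              b12a b12b b12c b452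
          have E12 := hpre w u' v' v Q12
          have st2 : d w v' < max (d w v) (d v v') := by
            have t : d w v' ≤ d u w := by rw [hsym w v']; exact e53
            have t2 : d u w < d w v := by rw [hsym w v]; exact h23
            exact lt_of_le_of_lt t (lt_of_lt_of_le t2 (le_max_left _ _))
          have hM := aux2 E12 st2
          have M : d u' v' ≤ d u w := by
            calc d u' v' ≤ d w v' := le_trans (le_max_right _ _) hM
              _ = d v' w := hsym _ _
              _ ≤ d u w := e53
          linarith
      · -- case (ii): d u w < d v w, d u' w' < d v' w'
        have b8a : C.btw w v' w' := C.cyclic (C.cyclic b563)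
        have b8b : C.btw w v' v := C.cyclic b235
        have b8c : C.btw w w' v := C.cyclic b236
        have Q8 : C.Chain ![w,v',w',v] :=
          C.chain4_intro nwv' nww' (Ne.symm hvw) hv'w' (Ne.symm nvv') (Ne.symm nvw')
            b8a b8b b8c b562
        have E8 := hpre w v' w' v Q8
        have l1 : d v' w' ≤ max (d w v') (d v' w') := le_max_right _ _
        have l2 : d w v ≤ max (d w v) (d v w') := le_max_left _ _
        have l3 : d w v = d v w := hsym _ _
        rcases min_cases (max (d w v') (d v' w')) (max (d w v) (d v w')) with
          ⟨he, _⟩|⟨he, _⟩ <;> linarith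
  · intro harc x y z t hch
    by_cases hxy : x = y
    · subst hxy
      rw [(hzero x x).mpr rfl, max_eq_right (hnn x z)]
      exact min_le_left _ _
    by_cases hyz : y = z
    · subst hyz
      rw [(hzero y y).mpr rfl, max_eq_left (hnn x y)]
      exact min_le_left _ _
    by_cases hxt : x = t
    · subst hxt
      rw [(hzero x x).mpr rfl, max_eq_right (hnn x z)]
      exact min_le_right _ _
    by_cases htz : t = z
    · subst htz
      rw [(hzero t t).mpr rfl, max_eq_left (hnn x t)]
      exact min_le_right _ _
    by_cases hxz : x = z
    · exfalso
      by_cases hyt : y = t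
      · subst hxz; subst hyt
        exact C.no3 hch (a := x) (b := y) (fun i => by fin_cases i <;> simp)
      · have b1 : C.btw x y t := hch.2 0 1 3 (by decide) (by decide) hxy hyt hxt
        have b2 : C.btw y z t := hch.2 1 2 3 (by decide) (by decide) hyz
          (Ne.symm htz) hyt
        rw [← hxz] at b2
        exact C.asymm b1 (C.cyclic (C.cyclic b2))
    by_cases hyt : y = t
    · exfalso
      subst hyt
      have b1 : C.btw x y z := hch.2 0 1 2 (by decide) (by decide) hxy hyz hxz
      have b2 : C.btw x z y := hch.2 0 2 3 (by decide) (by decide) hxz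
        (Ne.symm hyz) hxy
      exact C.asymm b1 (C.cyclic b2)
    have b1 : C.btw x y z := hch.2 0 1 2 (by decide) (by decide) hxy hyz hxz
    have b2 : C.btw x z t := hch.2 0 2 3 (by decide) (by decide) hxz
      (Ne.symm htz) hxt
    rcases harc x z hxz with hR | hR
    · exact le_trans (min_le_left _ _) (hR x y z (C.chain5_dup hxy hyz hxz b1))
    · have h5 := hR z t x
        (C.chain5_dup (Ne.symm htz) (Ne.symm hxt) (Ne.symm hxz) (C.cyclic b2))
      have hfin : max (d x t) (d t z) ≤ d x z := by
        rw [hsym x t, hsym t z, hsym x z, max_comm]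
        exact h5
      exact le_trans (min_le_right _ _) hfin
end

section
/- Let (X,d) be a strict quasi-circular Robinson space with compatible circular order β and let x ∈ X. Then any sphere S_r(x) = {y : d(x,y) = r} with r > 0 contains at most two points. -/
lemma chain4_of_btw {X : Type*} (C : CircOrder X) {a b c e : X}
    (h1 : C.btw a b c) (h2 : C.btw a b e) (h3 : C.btw a c e) (h4 : C.btw b c e) :
    C.Chain ![a, b, c, e] := by
  obtain ⟨hab, hbc, hac⟩ := C.distinct h1
  refine ⟨⟨0, 1, 2, by simpa using hab, by simpa using hbc, by simpa using hac⟩, ?_⟩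
  intro i j k hij hjk _ _ _
  fin_cases i <;> fin_cases j <;> fin_cases k <;> simp_all

theorem stmt11 {X : Type*} [Fintype X] (d : X → X → ℝ) (hd : Dissim d)
    (C : CircOrder X) (hc : sqcCompat C d) (x : X) (r : ℝ) (hr : 0 < r) :
    Set.ncard {y : X | d x y = r} ≤ 2 := by
  by_contra h
  push_neg at h
  rw [Set.two_lt_ncard (Set.toFinite _)] at h
  obtain ⟨y1, hy1, y2, hy2, y3, hy3, h12, h13, h23⟩ := h
  simp only [Set.mem_setOf_eq] at hy1 hy2 hy3
  obtain ⟨dsymm, dnonneg, dzero⟩ := hd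
  have hx : ∀ y : X, d x y = r → y ≠ x := by
    intro y hy hxy
    rw [hxy, (dzero x x).mpr rfl] at hy; linarith
  -- key: no chain a ⋖ b ⋖ x ⋖ c with a,b,c on the sphere
  have key : ∀ a b c : X, a ≠ b → b ≠ c → a ≠ c →
      d x a = r → d x b = r → d x c = r → C.Chain ![a, b, x, c] → False := by
    intro a b c hab hbc hac ha hb hcr hchain
    have hxa := hx a ha
    have hxb := hx b hb
    have hxc := hx c hcr
    have hpw : List.Pairwise (· ≠ ·) [a, b, x, c] := by
      have hxc' : x ≠ c := Ne.symm hxc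
      simp_all [List.pairwise_cons]
    have := hc a b x c hpw hchain
    rw [dsymm b x, dsymm c x, dsymm a x, ha, hb, hcr] at this
    simp at this
  have main : ∀ p q s : X, p ≠ q → q ≠ s → p ≠ s →
      d x p = r → d x q = r → d x s = r → C.btw p q s → False := by
    intro p q s hpq hqs hps hp hq hs h123
    have hxp := hx p hp
    have hxq := hx q hq
    have hxs := hx s hs
    have hqsp : C.btw q s p := C.cyclic h123
    have hspq : C.btw s p q := C.cyclic hqsp
    rcases C.total hxp (Ne.symm hxq) hpq with hcase | hcase
    · -- p ⋖ x ⋖ q : chain ![s, p, x, q]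
      have hpxs : C.btw p x s := C.btw_trans hcase h123
      have hspx : C.btw s p x := C.cyclic (C.cyclic hpxs)
      have hqpx : C.btw q p x := C.cyclic (C.cyclic hcase)
      have hqsx : C.btw q s x := C.btw_trans hqsp hqpx
      have hsxq : C.btw s x q := C.cyclic hqsx
      exact key s p q (Ne.symm hps) hpq (Ne.symm hqs) hs hp hq
        (chain4_of_btw C hspx hspq hsxq hcase)
    · -- q ⋖ x ⋖ p
      rcases C.total hxq (Ne.symm hxs) hqs with hcase2 | hcase2
      · -- q ⋖ x ⋖ s : chain ![p, q, x, s]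
        have hqxp : C.btw q x p := C.btw_trans hcase2 hqsp
        have hpqx : C.btw p q x := C.cyclic (C.cyclic hqxp)
        have hsqx : C.btw s q x := C.cyclic (C.cyclic hcase2)
        have hspx : C.btw s p x := C.btw_trans hspq hsqx
        have hpxs : C.btw p x s := C.cyclic hspx
        exact key p q s hpq hqs hps hp hq hs
          (chain4_of_btw C hpqx h123 hpxs hcase2)
      · -- s ⋖ x ⋖ q and q ⋖ x ⋖ p : chain ![q, s, x, p]
        have hqsx : C.btw q s x := C.cyclic (C.cyclic hcase2)
        have hxpq : C.btw x p q := C.cyclic hcase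
        have hxqs : C.btw x q s := C.cyclic hcase2
        have hxps : C.btw x p s := C.btw_trans hxpq hxqs
        have hsxp : C.btw s x p := C.cyclic (C.cyclic hxps)
        exact key q s p hqs (Ne.symm hps) (Ne.symm hpq) hq hs hp
          (chain4_of_btw C hqsx hqsp hcase hsxp)
  rcases C.total h12 h23 h13 with hb | hb
  · exact main y1 y2 y3 h12 h23 h13 hy1 hy2 hy3 hb
  · exact main y3 y2 y1 (Ne.symm h23) (Ne.symm h12) (Ne.symm h13) hy3 hy2 hy1 hb
end

section
/- Let (X,d) be a strict quasi-circular Robinson space with compatible circular order β, x ∈ X, and r < r_x (the eccentricity of x). If the sphere S_r(x) consists of two points y, y', then y and y' are x-separated, i.e., one lies in L_x = {t ∈ M_x : x ⋖ t ⋖ F_x} and the other in R_x = {t ∈ M_x : F_x ⋖ t ⋖ x}, where M_x = X ∖ (F_x ∪ {x}). -/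
section SphereHelpers

variable {X : Type*}

lemma chain4 (C : CircOrder X) {a b c d : X} (h1 : C.btw a b c) (h2 : C.btw a b d)
    (h3 : C.btw a c d) (h4 : C.btw b c d) : C.Chain ![a, b, c, d] := by
  refine ⟨⟨0, 1, 2, ?_, ?_, ?_⟩, ?_⟩
  · simpa using (C.distinct h1).1
  · simpa using (C.distinct h1).2.1
  · simpa using (C.distinct h1).2.2
  · intro i j k hij hjk _ _ _
    fin_cases i <;> fin_cases j <;> fin_cases k <;> simp_all

lemma pw4 {a b c d : X} (h1 : a ≠ b) (h2 : a ≠ c) (h3 : a ≠ d) (h4 : b ≠ c)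
    (h5 : b ≠ d) (h6 : c ≠ d) : List.Pairwise (· ≠ ·) [a, b, c, d] := by
  simp_all [List.pairwise_cons]

/-- Every point closer to `x` than all farthest neighbors lies entirely on one
side of `F_x`. -/
lemma sideLemma (C : CircOrder X) (d : X → X → ℝ) (hd : Dissim d)
    (hc : sqcCompat C d) (x t : X) (ht : t ≠ x)
    (hts : ∀ s ∈ Fset d x, d x t < d x s) :
    (∀ s ∈ Fset d x, C.btw x t s) ∨ (∀ s ∈ Fset d x, C.btw s t x) := by
  by_contra h
  push_neg at h
  obtain ⟨⟨s, hsF, hs⟩, ⟨s', hs'F, hs'⟩⟩ := h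
  have h0t : 0 ≤ d x t := hd.2.1 x t
  have hlts : d x t < d x s := hts s hsF
  have hlts' : d x t < d x s' := hts s' hs'F
  have hsx : x ≠ s := by
    intro h; apply absurd hlts; rw [← h, (hd.2.2 x x).2 rfl]; linarith
  have hs'x : x ≠ s' := by
    intro h; apply absurd hlts'; rw [← h, (hd.2.2 x x).2 rfl]; linarith
  have hts2 : t ≠ s := fun h => absurd hlts (by rw [h]; exact lt_irrefl _)
  have hts2' : t ≠ s' := fun h => absurd hlts' (by rw [h]; exact lt_irrefl _)
  -- from ¬ btw x t s, totality gives btw s t x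
  have b2 : C.btw s t x := (C.total ht.symm hts2 hsx).resolve_left hs
  have b1 : C.btw x t s' := (C.total ht.symm hts2' hs'x).resolve_right hs'
  have b3 : C.btw t x s := C.cyclic b2
  have b4 : C.btw x s t := C.cyclic b3
  have b5 : C.btw x s s' := C.btw_trans b4 b1
  have b6 : C.btw t s' x := C.cyclic b1
  have b7 : C.btw t s' s := C.btw_trans b6 b3
  have b9 : C.btw s' x s := C.cyclic (C.cyclic b5)
  have hch : C.Chain ![t, s', x, s] := chain4 C b6 b7 b3 b9
  have hpw : List.Pairwise (· ≠ ·) [t, s', x, s] :=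
    pw4 hts2' ht hts2 hs'x.symm (C.distinct b7).2.1 hsx
  have := hc t s' x s hpw hch
  rw [hd.1 s' x, hd.1 s x, hd.1 t x] at this
  have := lt_min hlts' hlts
  linarith [min_le_left (d x s') (d x s), min_le_right (d x s') (d x s)]

/-- Two points at the same distance from `x` cannot both lie on the left arc. -/
lemma bothL (C : CircOrder X) (d : X → X → ℝ) (hd : Dissim d)
    (hc : sqcCompat C d) (x x' y y' : X) (hr' : d x y < d x x')
    (hy2 : d x y' = d x y) (hby : C.btw x y x') (hby' : C.btw x y' x')
    (hord : C.btw x y y') : False := by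
  have c1 : C.btw y' x' x := C.cyclic hby'
  have c2 : C.btw y y' x := C.cyclic hord
  have c3 : C.btw y' x y := C.cyclic c2
  have c4 : C.btw y' x' y := C.btw_trans c1 c3
  have c6 : C.btw x' x y := C.cyclic (C.cyclic hby)
  have hch : C.Chain ![y', x', x, y] := chain4 C c1 c4 c3 c6
  have hpw : List.Pairwise (· ≠ ·) [y', x', x, y] :=
    pw4 (C.distinct c1).1 (C.distinct c3).1 (C.distinct c4).2.2
      (C.distinct c1).2.1 (C.distinct c4).2.1 (C.distinct c3).2.1
  have := hc y' x' x y hpw hch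
  rw [hd.1 x' x, hd.1 y x, hd.1 y' x] at this
  have hm : d x y ≤ min (d x x') (d x y) := le_min hr'.le le_rfl
  linarith

/-- Two points at the same distance from `x` cannot both lie on the right arc. -/
lemma bothR (C : CircOrder X) (d : X → X → ℝ) (hd : Dissim d)
    (hc : sqcCompat C d) (x x' y y' : X) (hr' : d x y < d x x')
    (hy2 : d x y' = d x y) (hby : C.btw x' y x) (hby' : C.btw x' y' x)
    (hord : C.btw x' y y') : False := by
  have c1 : C.btw y' x x' := C.cyclic hby'
  have c2 : C.btw y y' x' := C.cyclic hord
  have c3 : C.btw y' x' y := C.cyclic c2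
  have c4 : C.btw y' x y := C.btw_trans c1 c3
  have c6 : C.btw y y' x := C.cyclic (C.cyclic c4)
  have c7 : C.btw y x x' := C.cyclic hby
  have hch : C.Chain ![y, y', x, x'] := chain4 C c6 c2 c7 c1
  have hpw : List.Pairwise (· ≠ ·) [y, y', x, x'] :=
    pw4 (C.distinct c6).1 (C.distinct c6).2.2 (C.distinct c2).2.2
      (C.distinct c1).1 (C.distinct c2).2.1 (C.distinct c1).2.1
  have := hc y y' x x' hpw hch
  rw [hd.1 y' x, hd.1 x' x, hd.1 y x] at this
  have hm : d x y' ≤ min (d x y') (d x x') := le_min le_rfl (by rw [hy2]; exact hr'.le)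
  linarith

end SphereHelpers

theorem stmt12 {X : Type*} [Fintype X] (d : X → X → ℝ) (hd : Dissim d)
    (C : CircOrder X) (hc : sqcCompat C d) (x x' : X) (hx' : x' ∈ Fset d x)
    (r : ℝ) (hr : r < d x x') (y y' : X) (hyy' : y ≠ y')
    (hS : {u : X | d x u = r} = {y, y'}) :
    (y ∈ Lset C d x ∧ y' ∈ Rset C d x) ∨ (y' ∈ Lset C d x ∧ y ∈ Rset C d x) := by

  have hy : d x y = r := (Set.ext_iff.1 hS y).2 (by simp)
  have hy' : d x y' = r := (Set.ext_iff.1 hS y').2 (by simp)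
  have hrpos : 0 < r := by
    rcases (hy ▸ hd.2.1 x y).lt_or_eq with h | h
    · exact h
    · exfalso
      apply hyy'
      have e1 : x = y := (hd.2.2 x y).1 (by rw [hy]; exact h.symm)
      have e2 : x = y' := (hd.2.2 x y').1 (by rw [hy']; exact h.symm)
      rw [← e1, ← e2]
  have hyx : y ≠ x := by
    intro h
    apply hrpos.ne'
    rw [← hy, h]
    exact (hd.2.2 x x).2 rfl
  have hy'x : y' ≠ x := by
    intro h
    apply hrpos.ne'
    rw [← hy', h]
    exact (hd.2.2 x x).2 rfl
  have hFlt : ∀ s ∈ Fset d x, d x y < d x s := fun s hs => by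
    rw [hy]; exact lt_of_lt_of_le hr (hs x')
  have hFlt' : ∀ s ∈ Fset d x, d x y' < d x s := fun s hs => by
    rw [hy']; exact lt_of_lt_of_le hr (hs x')
  have hyF : y ∉ Fset d x := fun h => lt_irrefl _ (hFlt y h)
  have hy'F : y' ∉ Fset d x := fun h => lt_irrefl _ (hFlt' y' h)
  have hyx' : y ≠ x' := fun h => absurd (hFlt x' hx') (by rw [← h]; exact lt_irrefl _)
  have hy'x' : y' ≠ x' := fun h => absurd (hFlt' x' hx') (by rw [← h]; exact lt_irrefl _)
  have hxx' : x ≠ x' := by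
    intro h
    apply absurd (hFlt x' hx')
    rw [← h, (hd.2.2 x x).2 rfl]
    exact not_lt.2 (hd.2.1 x y)
  have heq : d x y' = d x y := by rw [hy, hy']
  have heq2 : d x y = d x y' := heq.symm
  have hrx' : d x y < d x x' := hFlt x' hx'
  have hrx'2 : d x y' < d x x' := hFlt' x' hx'
  rcases sideLemma C d hd hc x y hyx hFlt with hL | hR <;>
    rcases sideLemma C d hd hc x y' hy'x hFlt' with hL' | hR'
  · exfalso
    rcases C.total hyx.symm hyy' hy'x.symm with hord | hord
    · exact bothL C d hd hc x x' y y' hrx' heq (hL x' hx') (hL' x' hx') hord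
    · exact bothL C d hd hc x x' y' y hrx'2 heq2 (hL' x' hx') (hL x' hx')
        (C.cyclic (C.cyclic hord))
  · exact Or.inl ⟨⟨hyx, hyF, hL⟩, ⟨hy'x, hy'F, hR'⟩⟩
  · exact Or.inr ⟨⟨hy'x, hy'F, hL'⟩, ⟨hyx, hyF, hR⟩⟩
  · exfalso
    rcases C.total hyx'.symm hyy' hy'x'.symm with hord | hord
    · exact bothR C d hd hc x x' y y' hrx' heq (hR x' hx') (hR' x' hx') hord
    · exact bothR C d hd hc x x' y' y hrx'2 heq2 (hR' x' hx') (hR x' hx')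
        (C.cyclic (C.cyclic hord))
end
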